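/- arXiv:2211.07996 — 2 statements merged into one kernel-verified Lean document; each statement's English description precedes it below -/
import Mathlib

section
/- Fix integers r, s ≥ 1 and t ≥ 2, and let ρ ∈ Par_{r,s} be a t-core with a_i = a_i(ρ) for 0 ≤ i ≤ t−1. Then, as polynomials in q, Σ_{λ ∈ Par_{r,s}, core_t(λ) = ρ} q^{|λ|} = q^{|ρ|} · ∏_{i=0}^{t−1} [n_i choose a_i]_{q^t}, where [n choose a]_Q denotes the Gaussian binomial coefficient evaluated at Q = q^t. -/
open Finset

/-- Partitions in the `r × s` rectangle: weakly decreasing `r`-tuples with parts at most `s`. -/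
def IsRectPartition (r s : ℕ) (lam : Fin r → ℕ) : Prop :=
  (∀ i j : Fin r, i ≤ j → lam j ≤ lam i) ∧ ∀ i, lam i ≤ s

/-- The beta-set `β(λ) = {λ_i + r − i : 1 ≤ i ≤ r}` (with 0-indexed `i`). -/
def betaSet (r : ℕ) (lam : Fin r → ℕ) : Finset ℕ :=
  Finset.image (fun i : Fin r => lam i + (r - 1 - (i : ℕ))) Finset.univ

/-- `λ` is a `t`-core: for every `b ∈ β(λ)` with `b ≥ t`, also `b − t ∈ β(λ)`. -/
def IsTCore (r t : ℕ) (lam : Fin r → ℕ) : Prop :=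
  ∀ b ∈ betaSet r lam, t ≤ b → b - t ∈ betaSet r lam

/-- `n_i = ⌊(r+s+t−1−i)/t⌋`. -/
def nres (r s t i : ℕ) : ℕ := (r + s + t - 1 - i) / t

/-- `a_i(λ) = #{b ∈ β(λ) : b ≡ i (mod t)}`. -/
def aCount (r t : ℕ) (lam : Fin r → ℕ) (i : ℕ) : ℕ :=
  ((betaSet r lam).filter fun b => b % t = i).card

/-- The justification `J(λ)`: in each residue class `i` mod `t`, the `a_i(λ)` smallest
nonnegative integers congruent to `i`. -/
def justification (r t : ℕ) (lam : Fin r → ℕ) : Finset ℕ :=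
  (Finset.range t).biUnion fun i =>
    (Finset.range (aCount r t lam i)).image fun m => i + m * t

/-- The size of the `t`-core of `λ`: `Σ_{b ∈ J(λ)} b − r(r−1)/2`. -/
def coreSize (r t : ℕ) (lam : Fin r → ℕ) : ℕ :=
  (∑ b ∈ justification r t lam, b) - r * (r - 1) / 2

/-- The Gaussian binomial coefficient `[n choose a]_Q = ∏_{j=1}^{a} (1 − Q^{n−a+j})/(1 − Q^j)`,
as a rational function in `Q`. -/
noncomputable def gaussBinom (Q : RatFunc ℚ) (n a : ℕ) : RatFunc ℚ :=
  ∏ j ∈ Finset.Icc 1 a, (1 - Q ^ (n - a + j)) / (1 - Q ^ j)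

/-!
Beta-sets identify the partitions in the `r × s` rectangle with the `r`-subsets `B` of
`{0, …, r + s - 1}`, and `|λ| = ΣB - r(r-1)/2`. Reading `B` on the `t`-abacus, i.e. splitting it by
residues mod `t`, turns it into `t` sets `Sᵢ ⊆ {0, …, nᵢ - 1}` with `ΣB = Σᵢ (i |Sᵢ| + t ΣSᵢ)`, and
`core_t(λ) = ρ` says exactly that `|Sᵢ| = aᵢ` for every runner `i`. So the generating function
factors over the runners, each factor being the subset sum
`Σ_{|S| = a} Q^{ΣS} = Q^{a(a-1)/2} [n choose a]_Q` at `Q = q^t`. For the `t`-core `ρ` every runner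
of `β(ρ)` is an initial segment, which collects the leading powers into `q^{|ρ|}`.
-/

section QBinomial

variable {R : Type*} [CommRing R] (Q : R)

theorem sum_powersetCard_range_succ_pow (n a : ℕ) :
    ∑ S ∈ powersetCard (a + 1) (range (n + 1)), Q ^ ∑ b ∈ S, b =
      ∑ S ∈ powersetCard (a + 1) (range n), Q ^ ∑ b ∈ S, b +
        Q ^ n * ∑ S ∈ powersetCard a (range n), Q ^ ∑ b ∈ S, b := by
  have hn : n ∉ range n := notMem_range_self
  have hnS : ∀ S ∈ powersetCard a (range n), n ∉ S := fun S hS h =>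
    hn ((mem_powersetCard.1 hS).1 h)
  rw [range_add_one, powersetCard_succ_insert hn, sum_union, sum_image, mul_sum]
  · refine congrArg _ (sum_congr rfl fun S hS => ?_)
    rw [sum_insert (hnS S hS), pow_add]
  · intro S hS T hT hST
    rw [← erase_insert (hnS S hS), ← erase_insert (hnS T hT), hST]
  · refine disjoint_right.2 fun S hS hS' => ?_
    obtain ⟨T, -, rfl⟩ := mem_image.1 hS
    exact hn ((mem_powersetCard.1 hS').1 (mem_insert_self n T))

theorem prod_range_one_sub_pow_succ (m a : ℕ) :
    ∏ j ∈ range (a + 1), (1 - Q ^ (m + j + 1)) =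
      (1 - Q ^ (m + 1)) * ∏ j ∈ range a, (1 - Q ^ (m + 1 + j + 1)) := by
  rw [prod_range_succ', mul_comm]
  simp only [add_assoc, add_comm 1, add_zero]

/-- The `q`-binomial theorem for subset sums, cleared of denominators. -/
theorem sum_powersetCard_range_pow_mul_prod {n a : ℕ} (h : a ≤ n) :
    (∑ S ∈ powersetCard a (range n), Q ^ ∑ b ∈ S, b) * ∏ j ∈ range a, (1 - Q ^ (j + 1)) =
      Q ^ (∑ k ∈ range a, k) * ∏ j ∈ range a, (1 - Q ^ (n - a + j + 1)) := by
  induction n generalizing a with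
  | zero =>
    obtain rfl : a = 0 := by omega
    simp
  | succ n ih =>
    cases a with
    | zero => simp
    | succ a =>
      rw [sum_powersetCard_range_succ_pow, add_mul]
      rcases (show a < n ∨ a = n by omega) with ha | rfl
      · obtain ⟨m, rfl⟩ : ∃ m, n = m + a + 1 := ⟨n - a - 1, by omega⟩
        have h1 := ih (a := a + 1) (by omega)
        have h2 := ih (a := a) (by omega)
        rw [show m + a + 1 - (a + 1) = m by omega, prod_range_one_sub_pow_succ] at h1
        rw [show m + a + 1 - a = m + 1 by omega] at h2
        rw [show m + a + 1 + 1 - (a + 1) = m + 1 by omega]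
        simp only [prod_range_succ, sum_range_succ] at h1 ⊢
        linear_combination h1 + (Q ^ (m + a + 1) * (1 - Q ^ (a + 1))) * h2
      · have h2 := ih (a := a) le_rfl
        rw [powersetCard_eq_empty.2 (by simp), sum_empty, zero_mul, zero_add]
        simp only [prod_range_succ, sum_range_succ, Nat.sub_self] at h2 ⊢
        linear_combination (Q ^ a * (1 - Q ^ (a + 1))) * h2

end QBinomial

theorem RatFunc.X_pow_ne_one {K : Type*} [Field K] {n : ℕ} (hn : n ≠ 0) :
    (RatFunc.X : RatFunc K) ^ n ≠ 1 := by
  rw [← RatFunc.algebraMap_X, ← map_pow, ← map_one (algebraMap (Polynomial K) (RatFunc K)),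
    (RatFunc.algebraMap_injective K).ne_iff]
  intro h
  simpa [hn] using congrArg Polynomial.natDegree h

theorem sum_powersetCard_range_pow_eq_mul_gaussBinom {Q : RatFunc ℚ}
    (hQ : ∀ j, 0 < j → Q ^ j ≠ 1) {n a : ℕ} (h : a ≤ n) :
    ∑ S ∈ powersetCard a (range n), Q ^ ∑ b ∈ S, b = Q ^ (∑ k ∈ range a, k) * gaussBinom Q n a := by
  have hIcc : ∀ f : ℕ → RatFunc ℚ, ∏ j ∈ Icc 1 a, f j = ∏ j ∈ range a, f (j + 1) := fun f => by
    rw [range_eq_Ico, prod_Ico_add' f 0 a 1, ← Ico_add_one_right_eq_Icc]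
  have hden : ∏ j ∈ range a, (1 - Q ^ (j + 1)) ≠ 0 :=
    prod_ne_zero_iff.2 fun j _ => sub_ne_zero.2 (hQ (j + 1) j.succ_pos).symm
  rw [gaussBinom, prod_div_distrib, hIcc, hIcc, ← mul_div_assoc, eq_div_iff hden,
    sum_powersetCard_range_pow_mul_prod Q h]
  simp only [add_assoc]

section BetaSet

variable {r s : ℕ} {lam mu : Fin r → ℕ}

theorem IsRectPartition.antitone (h : IsRectPartition r s lam) : Antitone lam :=
  fun i j hij => h.1 i j hij

theorem strictAnti_beta (h : Antitone lam) :
    StrictAnti fun i : Fin r => lam i + (r - 1 - (i : ℕ)) := by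
  intro i j hij
  dsimp only
  have := h hij.le
  have : (i : ℕ) < j := hij
  have := j.isLt
  omega

theorem card_betaSet (h : Antitone lam) : #(betaSet r lam) = r := by
  rw [betaSet, card_image_of_injective _ (strictAnti_beta h).injective, card_univ,
    Fintype.card_fin]

theorem sum_betaSet (h : Antitone lam) :
    ∑ b ∈ betaSet r lam, b = ∑ i, lam i + r * (r - 1) / 2 := by
  rw [betaSet, sum_image fun i _ j _ hij => (strictAnti_beta h).injective hij, sum_add_distrib,
    Fin.sum_univ_eq_sum_range (fun i => r - 1 - i), sum_range_reflect (fun i => i) r,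
    sum_range_id]

theorem betaSet_subset_range (h : IsRectPartition r s lam) : betaSet r lam ⊆ range (r + s) := by
  simp only [betaSet, image_subset_iff, mem_univ, mem_range, forall_const]
  intro i
  have := h.2 i
  have := i.isLt
  omega

theorem eq_of_betaSet_eq (hlam : Antitone lam) (hmu : Antitone mu)
    (h : betaSet r lam = betaSet r mu) : lam = mu := by
  have hrange := congrArg (fun B : Finset ℕ => (B : Set ℕ)) h
  simp only [betaSet, coe_image, coe_univ, Set.image_univ] at hrange
  have hbeta := ((strictAnti_beta hlam).range_inj (strictAnti_beta hmu)).1 hrange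
  funext i
  have := congrFun hbeta i
  omega

theorem StrictAnti.antitone_add_val {f : Fin r → ℕ} (hf : StrictAnti f) :
    Antitone fun i => f i + i := by
  intro i j hij
  have := card_le_card_of_injOn f (s := Icc i j) (t := Icc (f j) (f i))
    (fun k hk => by
      obtain ⟨hik, hkj⟩ := mem_Icc.1 hk
      exact mem_Icc.2 ⟨hf.antitone hkj, hf.antitone hik⟩)
    hf.injective.injOn
  simp only [Fin.card_Icc, Nat.card_Icc] at this
  have : (i : ℕ) ≤ j := hij
  dsimp only
  omega

theorem exists_betaSet_eq {B : Finset ℕ} (hB : B ⊆ range (r + s)) (hcard : #B = r) :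
    ∃ lam, IsRectPartition r s lam ∧ betaSet r lam = B := by
  set f : Fin r → ℕ := fun i => B.orderEmbOfFin hcard i.rev
  have hf : StrictAnti f := (B.orderEmbOfFin hcard).strictMono.comp_strictAnti Fin.rev_strictAnti
  have hanti := hf.antitone_add_val
  have hlow (i : Fin r) : r - 1 ≤ f i + i := by
    have hi := i.isLt
    have := hanti (show i ≤ ⟨r - 1, by omega⟩ from Fin.le_def.2 (by dsimp only; omega))
    dsimp only at this
    omega
  have hup (i : Fin r) : f i + i < r + s := by
    have := hanti (show (⟨0, i.pos⟩ : Fin r) ≤ i from Fin.le_def.2 (Nat.zero_le _))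
    have := mem_range.1 (hB (B.orderEmbOfFin_mem hcard (Fin.rev ⟨0, i.pos⟩)))
    simp only [f] at *
    omega
  -- `λᵢ = fᵢ - (r - 1 - i)`, written so that antitonicity survives truncated subtraction
  refine ⟨fun i => f i + i - (r - 1), ⟨fun i j hij => Nat.sub_le_sub_right (hanti hij) _,
    fun i => by dsimp only; have := hup i; omega⟩, ?_⟩
  calc betaSet r (fun i => f i + i - (r - 1))
      = univ.image (B.orderEmbOfFin hcard ∘ Fin.rev) := by
        refine image_congr fun i _ => ?_
        have := hlow i
        have := i.isLt
        simp only [Function.comp_apply, f] at *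
        omega
    _ = B := by
        rw [← image_image, image_univ_of_surjective Fin.rev_surjective,
          image_orderEmbOfFin_univ]

theorem finsum_rectPartition_pow {K : Type*} [Field K] {q : K} (hq : q ≠ 0)
    (P : Finset ℕ → Prop) [DecidablePred P] :
    ∑ᶠ lam ∈ {lam : Fin r → ℕ | IsRectPartition r s lam ∧ P (betaSet r lam)}, q ^ ∑ i, lam i =
      (∑ B ∈ (powersetCard r (range (r + s))).filter P, q ^ ∑ b ∈ B, b) /
        q ^ (r * (r - 1) / 2) := by
  rw [sum_div, ← finsum_mem_coe_finset]
  refine finsum_mem_eq_of_bijOn (betaSet r) ⟨?_, ?_, ?_⟩ ?_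
  · rintro lam ⟨hlam, hP⟩
    simp [betaSet_subset_range hlam, card_betaSet hlam.antitone, hP]
  · rintro lam ⟨hlam, -⟩ mu ⟨hmu, -⟩ h
    exact eq_of_betaSet_eq hlam.antitone hmu.antitone h
  · intro B hB
    simp only [coe_filter, mem_powersetCard, Set.mem_ofPred_eq] at hB
    obtain ⟨lam, hlam, rfl⟩ := exists_betaSet_eq hB.1.1 hB.1.2
    exact ⟨lam, ⟨hlam, hB.2⟩, rfl⟩
  · rintro lam ⟨hlam, -⟩
    rw [sum_betaSet hlam.antitone, pow_add, mul_div_cancel_right₀ _ (pow_ne_zero _ hq)]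

end BetaSet

section Runners

variable {t : ℕ}

/-- Runner `i` of James' `t`-abacus of the bead set `B`. -/
def runner (t i : ℕ) (B : Finset ℕ) : Finset ℕ :=
  (B.filter (· % t = i)).image (· / t)

def ofRunners (t : ℕ) (g : Fin t → Finset ℕ) : Finset ℕ :=
  (univ.sigma g).image fun p => p.1 + p.2 * t

theorem mem_runner {i m : ℕ} {B : Finset ℕ} (hi : i < t) : m ∈ runner t i B ↔ i + m * t ∈ B := by
  simp only [runner, mem_image, mem_filter]
  constructor
  · rintro ⟨b, ⟨hb, rfl⟩, rfl⟩
    rwa [add_comm, mul_comm, Nat.div_add_mod]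
  · intro h
    refine ⟨i + m * t, ⟨h, ?_⟩, ?_⟩
    · rw [Nat.add_mul_mod_self_right, Nat.mod_eq_of_lt hi]
    · rw [Nat.add_mul_div_right _ _ (by omega), Nat.div_eq_of_lt hi, zero_add]

theorem card_runner (i : ℕ) (B : Finset ℕ) : #(runner t i B) = #(B.filter (· % t = i)) := by
  refine card_image_of_injOn fun b hb c hc hbc => ?_
  simp only [coe_filter, Set.mem_ofPred_eq] at hb hc
  rw [← Nat.div_add_mod b t, ← Nat.div_add_mod c t, hb.2, hc.2]
  exact congrArg (t * · + i) hbc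

theorem Fin.injective_val_add_mul :
    Function.Injective fun p : (_ : Fin t) × ℕ => (p.1 : ℕ) + p.2 * t := by
  rintro ⟨i, m⟩ ⟨j, n⟩ h
  dsimp only at h
  have hij : i = j := Fin.ext <| by
    simpa [Nat.add_mul_mod_self_right, Nat.mod_eq_of_lt i.isLt, Nat.mod_eq_of_lt j.isLt] using
      congrArg (· % t) h
  subst hij
  obtain rfl : m = n := Nat.eq_of_mul_eq_mul_right i.pos (Nat.add_left_cancel h)
  rfl

theorem mem_ofRunners {g : Fin t → Finset ℕ} {b : ℕ} :
    b ∈ ofRunners t g ↔ ∃ i : Fin t, ∃ m ∈ g i, i + m * t = b := by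
  simp [ofRunners]

theorem runner_ofRunners (g : Fin t → Finset ℕ) (i : Fin t) :
    runner t i (ofRunners t g) = g i := by
  ext m
  rw [mem_runner i.isLt, mem_ofRunners]
  constructor
  · rintro ⟨j, n, hn, h⟩
    obtain ⟨rfl, rfl⟩ : j = i ∧ n = m := by
      simpa using Fin.injective_val_add_mul (t := t) (a₁ := ⟨j, n⟩) (a₂ := ⟨i, m⟩) h
    exact hn
  · exact fun hm => ⟨i, m, hm, rfl⟩

theorem ofRunners_runner (ht : 0 < t) (B : Finset ℕ) :
    ofRunners t (fun i => runner t i B) = B := by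
  ext b
  simp only [mem_ofRunners]
  constructor
  · rintro ⟨i, m, hm, rfl⟩
    exact (mem_runner i.isLt).1 hm
  · intro hb
    refine ⟨⟨b % t, Nat.mod_lt b ht⟩, b / t, (mem_runner (Nat.mod_lt b ht)).2 ?_,
      Nat.mod_add_div' b t⟩
    rwa [Nat.mod_add_div']

theorem card_ofRunners (g : Fin t → Finset ℕ) : #(ofRunners t g) = ∑ i, #(g i) := by
  rw [ofRunners, card_image_of_injective _ Fin.injective_val_add_mul, card_sigma]

theorem sum_ofRunners (g : Fin t → Finset ℕ) :
    ∑ b ∈ ofRunners t g, b = ∑ i : Fin t, (i * #(g i) + t * ∑ m ∈ g i, m) := by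
  rw [ofRunners, sum_image fun p _ q _ h => Fin.injective_val_add_mul h, sum_sigma]
  refine sum_congr rfl fun i _ => ?_
  dsimp only
  rw [sum_add_distrib, sum_const, smul_eq_mul, ← sum_mul]
  ring

theorem ofRunners_subset_range_iff {g : Fin t → Finset ℕ} {N : ℕ} :
    ofRunners t g ⊆ range N ↔ ∀ i : Fin t, g i ⊆ range ((N + t - 1 - i) / t) := by
  have key (i : Fin t) (m : ℕ) : i + m * t < N ↔ m < (N + t - 1 - i) / t := by
    have := i.isLt
    rw [Nat.lt_iff_add_one_le (m := m), Nat.le_div_iff_mul_le i.pos, add_one_mul]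
    omega
  simp only [subset_iff, mem_ofRunners, mem_range]
  constructor
  · exact fun h i m hm => (key i m).1 (h ⟨i, m, hm, rfl⟩)
  · rintro h _ ⟨i, m, hm, rfl⟩
    exact (key i m).2 (h i hm)

theorem card_eq_sum_card_runner (ht : 0 < t) (B : Finset ℕ) :
    #B = ∑ i : Fin t, #(runner t i B) := by
  conv_lhs => rw [← ofRunners_runner ht B]
  exact card_ofRunners _

theorem sum_pow_eq_prod_runners {M : Type*} [CommSemiring M] (q : M) (ht : 0 < t) {N R : ℕ}
    (a : Fin t → ℕ) (ha : ∑ i, a i = R) :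
    ∑ B ∈ (powersetCard R (range N)).filter (fun B => ∀ i : Fin t, #(runner t i B) = a i),
        q ^ ∑ b ∈ B, b =
      ∏ i : Fin t, q ^ ((i : ℕ) * a i) *
        ∑ S ∈ powersetCard (a i) (range ((N + t - 1 - i) / t)), (q ^ t) ^ ∑ m ∈ S, m := by
  simp_rw [mul_sum]
  rw [prod_univ_sum]
  refine sum_nbij' (fun B i => runner t i B) (ofRunners t) ?_ ?_ ?_ ?_ ?_
  · intro B hB
    simp only [mem_filter, mem_powersetCard, Fintype.mem_piFinset] at hB ⊢
    have hsub := hB.1.1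
    rw [← ofRunners_runner ht B, ofRunners_subset_range_iff] at hsub
    exact fun i => ⟨hsub i, hB.2 i⟩
  · intro g hg
    simp only [mem_filter, mem_powersetCard, Fintype.mem_piFinset] at hg ⊢
    refine ⟨⟨ofRunners_subset_range_iff.2 fun i => (hg i).1, ?_⟩, fun i => ?_⟩
    · rw [card_ofRunners, ← ha]
      exact sum_congr rfl fun i _ => (hg i).2
    · rw [runner_ofRunners, (hg i).2]
  · exact fun B _ => ofRunners_runner ht B
  · exact fun g _ => funext (runner_ofRunners g)
  · intro B hB
    rw [mem_filter] at hB
    conv_lhs => rw [← ofRunners_runner ht B]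
    rw [sum_ofRunners, ← prod_pow_eq_pow_sum]
    refine prod_congr rfl fun i _ => ?_
    rw [hB.2 i, pow_add, pow_mul, pow_mul]

end Runners

section Core

variable {r s t : ℕ} {lam mu ρ : Fin r → ℕ}

theorem aCount_eq_card_runner (lam : Fin r → ℕ) (i : ℕ) :
    aCount r t lam i = #(runner t i (betaSet r lam)) :=
  (card_runner i _).symm

theorem aCount_le_nres (h : IsRectPartition r s lam) (i : Fin t) :
    aCount r t lam i ≤ nres r s t i := by
  have hsub := betaSet_subset_range h
  rw [← ofRunners_runner i.pos (betaSet r lam), ofRunners_subset_range_iff] at hsub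
  simpa [aCount_eq_card_runner, nres] using card_le_card (hsub i)

theorem pow_mul_sum_powersetCard_eq_mul_gaussBinom (h : IsRectPartition r s lam) (i : Fin t) :
    (RatFunc.X : RatFunc ℚ) ^ ((i : ℕ) * aCount r t lam i) *
        ∑ S ∈ powersetCard (aCount r t lam i) (range ((r + s + t - 1 - i) / t)),
          ((RatFunc.X : RatFunc ℚ) ^ t) ^ ∑ m ∈ S, m =
      (RatFunc.X : RatFunc ℚ) ^ ((i : ℕ) * aCount r t lam i +
          t * ∑ k ∈ range (aCount r t lam i), k) *
        gaussBinom (RatFunc.X ^ t) (nres r s t i) (aCount r t lam i) := by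
  have hX (j : ℕ) (hj : 0 < j) : ((RatFunc.X : RatFunc ℚ) ^ t) ^ j ≠ 1 := by
    rw [← pow_mul]
    exact RatFunc.X_pow_ne_one (Nat.mul_ne_zero i.pos.ne' hj.ne')
  rw [← nres, sum_powersetCard_range_pow_eq_mul_gaussBinom hX (aCount_le_nres h i), pow_add,
    pow_mul _ t, mul_assoc]

theorem justification_eq_ofRunners (lam : Fin r → ℕ) :
    justification r t lam = ofRunners t fun i => range (aCount r t lam i) := by
  ext b
  simp [justification, mem_ofRunners, Fin.exists_iff]

theorem justification_eq_justification_iff :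
    justification r t lam = justification r t mu ↔
      ∀ i : Fin t, aCount r t lam i = aCount r t mu i := by
  simp only [justification_eq_ofRunners]
  constructor
  · intro h i
    simpa [runner_ofRunners] using congrArg (fun B => #(runner t i B)) h
  · intro h
    simp only [h]

theorem Finset.eq_range_card_of_add_one_mem {M : Finset ℕ} (h : ∀ m, m + 1 ∈ M → m ∈ M) :
    M = range #M := by
  have hdown (d m : ℕ) (hm : m + d ∈ M) : m ∈ M := by
    induction d with
    | zero => exact hm
    | succ d ih => exact ih (h _ (by rwa [← add_assoc] at hm))
  have hsub : M ⊆ range #M := fun x hx => mem_range.2 <| by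
    have : range (x + 1) ⊆ M := fun y hy =>
      hdown (x - y) y (by rwa [Nat.add_sub_cancel' (Nat.lt_succ_iff.1 (mem_range.1 hy))])
    simpa using card_le_card this
  exact eq_of_subset_of_card_le hsub (card_range _).le

theorem runner_betaSet_of_isTCore (hcore : IsTCore r t ρ) (i : Fin t) :
    runner t i (betaSet r ρ) = range (aCount r t ρ i) := by
  rw [aCount_eq_card_runner]
  refine eq_range_card_of_add_one_mem fun m hm => ?_
  rw [mem_runner i.isLt] at hm ⊢
  have := hcore _ hm (by nlinarith)
  rwa [show i + (m + 1) * t - t = i + m * t by rw [add_one_mul]; omega] at this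

theorem justification_eq_betaSet_of_isTCore (ht : 0 < t) (hcore : IsTCore r t ρ) :
    justification r t ρ = betaSet r ρ := by
  rw [justification_eq_ofRunners]
  conv_rhs => rw [← ofRunners_runner ht (betaSet r ρ)]
  simp only [runner_betaSet_of_isTCore hcore]

theorem sum_betaSet_of_isTCore (ht : 0 < t) (hcore : IsTCore r t ρ) :
    ∑ b ∈ betaSet r ρ, b =
      ∑ i : Fin t, ((i : ℕ) * aCount r t ρ i + t * ∑ k ∈ range (aCount r t ρ i), k) := by
  rw [← justification_eq_betaSet_of_isTCore ht hcore, justification_eq_ofRunners, sum_ofRunners]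
  simp only [card_range]

end Core

theorem genfun_fixed_core_general (r s t : ℕ) (ht : 2 ≤ t)
    (ρ : Fin r → ℕ) (hρ : IsRectPartition r s ρ) (hcore : IsTCore r t ρ) :
    (∑ᶠ lam ∈ {lam : Fin r → ℕ | IsRectPartition r s lam ∧
          justification r t lam = betaSet r ρ},
        (RatFunc.X : RatFunc ℚ) ^ (∑ i, lam i)) =
      (RatFunc.X : RatFunc ℚ) ^ (∑ i, ρ i) *
        ∏ i ∈ Finset.range t,
          gaussBinom ((RatFunc.X : RatFunc ℚ) ^ t) (nres r s t i) (aCount r t ρ i) := by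
  have ht0 : 0 < t := by omega
  have hJ := justification_eq_betaSet_of_isTCore ht0 hcore
  have hcard : ∑ i : Fin t, aCount r t ρ i = r := by
    simp only [aCount_eq_card_runner, ← card_eq_sum_card_runner ht0, card_betaSet hρ.antitone]
  have hsupport : {lam | IsRectPartition r s lam ∧ justification r t lam = betaSet r ρ} =
      {lam | IsRectPartition r s lam ∧
        ∀ i : Fin t, #(runner t i (betaSet r lam)) = aCount r t ρ i} := by
    simp only [← hJ, justification_eq_justification_iff, aCount_eq_card_runner]
  rw [hsupport, finsum_rectPartition_pow RatFunc.X_ne_zero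
      (fun B => ∀ i : Fin t, #(runner t i B) = aCount r t ρ i),
    sum_pow_eq_prod_runners _ ht0 _ hcard,
    prod_congr rfl fun i _ => pow_mul_sum_powersetCard_eq_mul_gaussBinom hρ i, prod_mul_distrib,
    prod_pow_eq_pow_sum, ← sum_betaSet_of_isTCore ht0 hcore, sum_betaSet hρ.antitone, pow_add,
    Fin.prod_univ_eq_prod_range
      (fun i => gaussBinom (RatFunc.X ^ t) (nres r s t i) (aCount r t ρ i)),
    mul_right_comm, mul_div_cancel_right₀ _ (pow_ne_zero _ RatFunc.X_ne_zero)]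

/-- For a `t`-core `ρ ∈ Par_{r,s}`,
`Σ_{λ ∈ Par_{r,s}, core_t(λ) = ρ} q^{|λ|} = q^{|ρ|} ∏_{i=0}^{t−1} [n_i choose a_i]_{q^t}`.
Here `core_t(λ) = ρ` is expressed as `J(λ) = β(ρ)`. -/
theorem genfun_fixed_core (r s t : ℕ) (hr : 1 ≤ r) (hs : 1 ≤ s) (ht : 2 ≤ t)
    (ρ : Fin r → ℕ) (hρ : IsRectPartition r s ρ) (hcore : IsTCore r t ρ) :
    (∑ᶠ lam ∈ {lam : Fin r → ℕ | IsRectPartition r s lam ∧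
          justification r t lam = betaSet r ρ},
        (RatFunc.X : RatFunc ℚ) ^ (∑ i, lam i)) =
      (RatFunc.X : RatFunc ℚ) ^ (∑ i, ρ i) *
        ∏ i ∈ Finset.range t,
          gaussBinom ((RatFunc.X : RatFunc ℚ) ^ t) (nres r s t i) (aCount r t ρ i) :=
  genfun_fixed_core_general r s t ht ρ hρ hcore
end

section
/- Fix an integer t ≥ 2 and positive integers r, s both divisible by t. Then (1/C(r+s,r)) · Σ_{λ ∈ Par_{r,s}} |core_t(λ)| = ((t−1)/2) · rs/(r+s−1). -/
open Finset

/-!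
The beta-set identifies `Par_{r,s}` with the `r`-subsets `B` of `{0, …, n-1}`, `n = r + s`, and
`Σ_{b ∈ J(B)} b = Σ_i (i a_i + t C(a_i, 2))` depends only on the residue counts
`a_i = #(B ∩ C_i)`, where the residue class `C_i` of `i` in `{0, …, n-1}` has `n/t` elements
because `t ∣ n`. Double counting pairs `(A, B)` with `A ⊆ B ∩ C` and `#A = k` gives
`Σ_B C(#(B ∩ C), k) = C(#C, k) C(n-k, r-k)`, so the cases `k = 1, 2` yield the total of
`Σ_{b ∈ J(B)} b` over all `B`; subtracting `C(r, 2)` from each term leaves the stated average.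
-/

lemma Fin.apply_add_sub_le_of_strictMono {r : ℕ} {f : Fin r → ℕ} (hf : StrictMono f)
    {a b : Fin r} (hab : a ≤ b) : f a + (b - a : ℕ) ≤ f b := by
  have hsub : (Icc a b).image f ⊆ Icc (f a) (f b) := by
    intro x hx
    obtain ⟨k, hk, rfl⟩ := mem_image.1 hx
    rw [mem_Icc] at hk ⊢
    exact ⟨hf.monotone hk.1, hf.monotone hk.2⟩
  have := card_le_card hsub
  rw [card_image_of_injective _ hf.injective, Fin.card_Icc, Nat.card_Icc] at this
  omega

lemma betaSet_eq_image_rev (r : ℕ) (lam : Fin r → ℕ) :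
    betaSet r lam = univ.image fun k : Fin r => lam k.rev + k := by
  ext x
  simp only [betaSet, mem_image, mem_univ, true_and]
  constructor <;> rintro ⟨i, rfl⟩ <;> exact ⟨i.rev, by simp [Fin.val_rev]; omega⟩

/-- Inverse of `betaSet`: `λ_i` is the `(r-1-i)`-th smallest element of `B`, minus `r-1-i`. -/
noncomputable def partitionOfBetaSet (r : ℕ) (B : Finset ℕ) : Fin r → ℕ :=
  fun i => if h : #B = r then B.orderEmbOfFin h i.rev - i.rev else 0

namespace IsRectPartition

variable {r s : ℕ} {lam : Fin r → ℕ}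

lemma strictMono_rev_add (h : IsRectPartition r s lam) :
    StrictMono fun k : Fin r => lam k.rev + k := by
  intro a b hab
  have : lam a.rev ≤ lam b.rev := h.1 _ _ (Fin.rev_le_rev.2 hab.le)
  simp only
  omega

lemma card_betaSet (h : IsRectPartition r s lam) : #(betaSet r lam) = r := by
  rw [betaSet_eq_image_rev, card_image_of_injective _ h.strictMono_rev_add.injective,
    card_univ, Fintype.card_fin]

lemma betaSet_mem_powersetCard (h : IsRectPartition r s lam) :
    betaSet r lam ∈ (range (r + s)).powersetCard r := by
  refine mem_powersetCard.2 ⟨fun x hx => ?_, h.card_betaSet⟩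
  obtain ⟨i, -, rfl⟩ := mem_image.1 hx
  have := h.2 i
  have := i.isLt
  rw [mem_range]
  omega

lemma partitionOfBetaSet_betaSet (h : IsRectPartition r s lam) :
    partitionOfBetaSet r (betaSet r lam) = lam := by
  have hemb : (betaSet r lam).orderEmbOfFin h.card_betaSet = fun k : Fin r => lam k.rev + k :=
    (orderEmbOfFin_unique (s := betaSet r lam) h.card_betaSet
      (fun k => by rw [betaSet_eq_image_rev]; exact mem_image_of_mem _ (mem_univ k))
      h.strictMono_rev_add).symm
  funext i
  simp [partitionOfBetaSet, h.card_betaSet, hemb]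

end IsRectPartition

section partitionOfBetaSet

variable {r s : ℕ} {B : Finset ℕ}

lemma partitionOfBetaSet_rev_add (hB : #B = r) (k : Fin r) :
    partitionOfBetaSet r B k.rev + k = B.orderEmbOfFin hB k := by
  have := Fin.apply_add_sub_le_of_strictMono (B.orderEmbOfFin hB).strictMono
    (show (⟨0, k.pos⟩ : Fin r) ≤ k from Nat.zero_le _)
  simp only at this
  simp only [partitionOfBetaSet, dif_pos hB, Fin.rev_rev]
  omega

lemma betaSet_partitionOfBetaSet (hB : #B = r) : betaSet r (partitionOfBetaSet r B) = B := by
  simp only [betaSet_eq_image_rev, partitionOfBetaSet_rev_add hB, image_orderEmbOfFin_univ]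

lemma isRectPartition_partitionOfBetaSet (hB : B ∈ (range (r + s)).powersetCard r) :
    IsRectPartition r s (partitionOfBetaSet r B) := by
  obtain ⟨hBsub, hcard⟩ := mem_powersetCard.1 hB
  set f := B.orderEmbOfFin hcard
  have hf (i : Fin r) : partitionOfBetaSet r B i = f i.rev - i.rev := dif_pos hcard
  refine ⟨fun i j hij => ?_, fun i => ?_⟩
  · have := Fin.apply_add_sub_le_of_strictMono f.strictMono (Fin.rev_le_rev.2 hij)
    rw [hf, hf]
    omega
  · have hr : r - 1 < r := Nat.sub_one_lt_of_lt i.isLt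
    have hlast : f ⟨r - 1, hr⟩ < r + s := mem_range.1 (hBsub (B.orderEmbOfFin_mem hcard _))
    have := Fin.apply_add_sub_le_of_strictMono f.strictMono
      (show i.rev ≤ ⟨r - 1, hr⟩ from Nat.le_sub_one_of_lt i.rev.isLt)
    simp only at this
    rw [hf]
    omega

end partitionOfBetaSet

lemma bijOn_betaSet (r s : ℕ) :
    Set.BijOn (betaSet r) {lam | IsRectPartition r s lam} ↑((range (r + s)).powersetCard r) :=
  Set.InvOn.bijOn (f' := partitionOfBetaSet r)
    ⟨fun _ h => IsRectPartition.partitionOfBetaSet_betaSet h,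
      fun _ hB => betaSet_partitionOfBetaSet (mem_powersetCard.1 hB).2⟩
    (fun _ h => IsRectPartition.betaSet_mem_powersetCard h)
    (fun _ hB => isRectPartition_partitionOfBetaSet hB)

def residueCount (t : ℕ) (B : Finset ℕ) (i : ℕ) : ℕ := #{b ∈ B | b % t = i}

def justify (t : ℕ) (B : Finset ℕ) : Finset ℕ :=
  (range t).biUnion fun i => (range (residueCount t B i)).image fun m => i + m * t

lemma justification_eq_justify (r t : ℕ) (lam : Fin r → ℕ) :
    justification r t lam = justify t (betaSet r lam) := rfl

section justify

variable {t : ℕ} (B : Finset ℕ)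

lemma mod_eq_of_mem_image_add_mul {i a x : ℕ} (hi : i < t)
    (hx : x ∈ (range a).image fun m => i + m * t) : x % t = i := by
  obtain ⟨m, -, rfl⟩ := mem_image.1 hx
  rw [Nat.add_mul_mod_self_right, Nat.mod_eq_of_lt hi]

lemma pairwiseDisjoint_justify :
    Set.PairwiseDisjoint ↑(range t)
      fun i => (range (residueCount t B i)).image fun m => i + m * t := by
  intro i hi j hj hij
  refine disjoint_left.2 fun x hxi hxj => hij ?_
  rw [← mod_eq_of_mem_image_add_mul (mem_range.1 hi) hxi,
    mod_eq_of_mem_image_add_mul (mem_range.1 hj) hxj]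

lemma injective_add_mul (ht : 0 < t) (i : ℕ) : Function.Injective fun m => i + m * t :=
  fun _ _ h => Nat.eq_of_mul_eq_mul_right ht (Nat.add_left_cancel h)

lemma card_justify (ht : 0 < t) : #(justify t B) = #B := by
  rw [justify, card_biUnion (pairwiseDisjoint_justify B)]
  simp only [card_image_of_injective _ (injective_add_mul ht _), card_range, residueCount]
  exact (card_eq_sum_card_fiberwise fun x _ => mem_range.2 (Nat.mod_lt x ht)).symm

lemma sum_justify (ht : 0 < t) :
    ∑ b ∈ justify t B, b =
      ∑ i ∈ range t, (i * residueCount t B i + t * (residueCount t B i).choose 2) := by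
  rw [justify, sum_biUnion (pairwiseDisjoint_justify B)]
  refine sum_congr rfl fun i _ => ?_
  rw [sum_image fun _ _ _ _ h => injective_add_mul ht i h, sum_add_distrib, sum_const,
    card_range, smul_eq_mul, ← sum_mul, sum_range_id, ← Nat.choose_two_right]
  ring

end justify

lemma choose_two_card_le_sum (J : Finset ℕ) : (#J).choose 2 ≤ ∑ b ∈ J, b := by
  have := Finset.sum_range_le_sum (s := J.map Nat.castEmbedding) (c := 0) (by simp)
  simp only [card_map, sum_map, zero_add, Nat.castEmbedding_apply] at this
  rw [Nat.choose_two_right, ← sum_range_id, ← Nat.cast_le (α := ℤ)]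
  push_cast
  exact this

lemma IsRectPartition.coreSize_add_choose_two {r s t : ℕ} {lam : Fin r → ℕ}
    (h : IsRectPartition r s lam) (ht : 0 < t) :
    coreSize r t lam + r.choose 2 = ∑ b ∈ justify t (betaSet r lam), b := by
  have := choose_two_card_le_sum (justify t (betaSet r lam))
  rw [card_justify _ ht, h.card_betaSet] at this
  rw [coreSize, justification_eq_justify, ← Nat.choose_two_right, Nat.sub_add_cancel this]

lemma sum_powersetCard_choose_card_filter {α : Type*} [DecidableEq α] (U : Finset α)
    (p : α → Prop) [DecidablePred p] {k r : ℕ} (hkr : k ≤ r) :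
    ∑ B ∈ U.powersetCard r, (#{b ∈ B | p b}).choose k =
      (#{x ∈ U | p x}).choose k * (#U - k).choose (r - k) := by
  have habove : ∀ B ∈ U.powersetCard r, (#{b ∈ B | p b}).choose k =
      #(({x ∈ U | p x}.powersetCard k).bipartiteAbove (fun B A => A ⊆ B) B) := by
    intro B hB
    rw [← card_powersetCard, bipartiteAbove]
    congr 1
    ext A
    simp only [mem_powersetCard, mem_filter, subset_iff]
    have := (mem_powersetCard.1 hB).1
    constructor
    · rintro ⟨hA, rfl⟩
      exact ⟨⟨fun x hx => ⟨this (hA hx).1, (hA hx).2⟩, rfl⟩, fun x hx => (hA hx).1⟩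
    · rintro ⟨⟨hA, rfl⟩, hAB⟩
      exact ⟨fun x hx => ⟨hAB hx, (hA hx).2⟩, rfl⟩
  have hbelow : ∀ A ∈ {x ∈ U | p x}.powersetCard k,
      #((U.powersetCard r).bipartiteBelow (fun B A => A ⊆ B) A) = (#U - k).choose (r - k) := by
    intro A hA
    obtain ⟨hAU, rfl⟩ := mem_powersetCard.1 hA
    exact card_filter_powersetCard_subset A U r (hAU.trans (filter_subset _ _)) hkr
  rw [sum_congr rfl habove, sum_card_bipartiteAbove_eq_sum_card_bipartiteBelow,
    sum_congr rfl hbelow, sum_const, card_powersetCard, smul_eq_mul]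

lemma card_filter_range_mod_eq {n t i : ℕ} (ht : 0 < t) (hi : i < t) (htn : t ∣ n) :
    #{x ∈ range n | x % t = i} = n / t := by
  have := Nat.count_modEq_card n ht i
  rw [Nat.count_eq_card_filter_range, Nat.mod_eq_zero_of_dvd htn] at this
  simpa [Nat.ModEq, Nat.mod_eq_of_lt hi] using this

lemma sum_powersetCard_sum_justify {n r t : ℕ} (ht : 0 < t) (htn : t ∣ n) (hr : 2 ≤ r) :
    ∑ B ∈ (range n).powersetCard r, ∑ b ∈ justify t B, b =
      t.choose 2 * (n / t) * (n - 1).choose (r - 1) +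
        t * t * (n / t).choose 2 * (n - 2).choose (r - 2) := by
  have hcount (k : ℕ) (hk : k ≤ r) (i : ℕ) (hi : i ∈ range t) :
      ∑ B ∈ (range n).powersetCard r, (residueCount t B i).choose k =
        (n / t).choose k * (n - k).choose (r - k) := by
    have := sum_powersetCard_choose_card_filter (range n) (· % t = i) hk
    rwa [card_range, card_filter_range_mod_eq ht (mem_range.1 hi) htn] at this
  have hsum (i : ℕ) (hi : i ∈ range t) :
      ∑ B ∈ (range n).powersetCard r,
          (i * residueCount t B i + t * (residueCount t B i).choose 2) =
        i * (n / t * (n - 1).choose (r - 1)) + t * ((n / t).choose 2 * (n - 2).choose (r - 2)) := by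
    have hcount₁ := hcount 1 (by omega) i hi
    simp only [Nat.choose_one_right] at hcount₁
    rw [sum_add_distrib, ← mul_sum, ← mul_sum, hcount₁, hcount 2 hr i hi]
  simp only [sum_congr rfl fun B _ => sum_justify B ht]
  rw [sum_comm, sum_congr rfl hsum, sum_add_distrib, ← sum_mul, sum_range_id,
    ← Nat.choose_two_right, sum_const, card_range, smul_eq_mul]
  ring

lemma cast_sum_powersetCard_sum_justify {n r t : ℕ} (ht : 0 < t) (htn : t ∣ n) (hr : 2 ≤ r)
    (hrn : r ≤ n) :
    ((∑ B ∈ (range n).powersetCard r, ∑ b ∈ justify t B, b : ℕ) : ℚ) =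
      n.choose r * (r * (t - 1) / 2 + r * (r - 1) * (n - t) / (2 * (n - 1))) := by
  obtain ⟨q, rfl⟩ : ∃ q, r = q + 2 := ⟨r - 2, by omega⟩
  obtain ⟨m, rfl⟩ : ∃ m, n = m + 2 := ⟨n - 2, by omega⟩
  have hK : ((m + 1).choose (q + 1) : ℚ) = (m + 2).choose (q + 2) * (q + 2) / (m + 2) := by
    rw [eq_div_iff (by positivity)]
    exact_mod_cast (mul_comm _ _).trans (Nat.add_one_mul_choose_eq (m + 1) (q + 1))
  have hL : (m.choose q : ℚ) = (m + 1).choose (q + 1) * (q + 1) / (m + 1) := by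
    rw [eq_div_iff (by positivity)]
    exact_mod_cast (mul_comm _ _).trans (Nat.add_one_mul_choose_eq m q)
  rw [sum_powersetCard_sum_justify ht htn hr]
  push_cast [Nat.cast_choose_two, Nat.cast_div htn (Nat.cast_ne_zero.2 ht.ne'), Nat.add_sub_cancel]
  have ht' : (t : ℚ) ≠ 0 := Nat.cast_ne_zero.2 ht.ne'
  rw [hL, hK, show (m : ℚ) + 2 - 1 = m + 1 by ring]
  field_simp
  ring

theorem expected_core_size_divisible_general (r s t : ℕ) (hr : 1 ≤ r) (ht : 2 ≤ t)
    (hrt : t ∣ r) (hst : t ∣ s) :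
    (1 / ((r + s).choose r : ℚ)) *
        ∑ᶠ lam ∈ {lam : Fin r → ℕ | IsRectPartition r s lam}, (coreSize r t lam : ℚ) =
      (((t : ℚ) - 1) / 2) * ((r : ℚ) * (s : ℚ) / ((r : ℚ) + (s : ℚ) - 1)) := by
  have hr2 : 2 ≤ r := ht.trans (Nat.le_of_dvd hr hrt)
  have ht0 : 0 < t := by omega
  have hcore : ∀ lam ∈ {lam | IsRectPartition r s lam}, (coreSize r t lam : ℚ) =
      ((∑ b ∈ justify t (betaSet r lam), b : ℕ) : ℚ) - r.choose 2 :=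
    fun lam h => eq_sub_of_add_eq (mod_cast h.coreSize_add_choose_two ht0)
  rw [finsum_mem_eq_of_bijOn _ (bijOn_betaSet r s)
      (g := fun B => ((∑ b ∈ justify t B, b : ℕ) : ℚ) - r.choose 2) hcore,
    finsum_mem_coe_finset, sum_sub_distrib, ← Nat.cast_sum,
    cast_sum_powersetCard_sum_justify ht0 (dvd_add hrt hst) hr2 (by omega),
    sum_const, card_powersetCard, card_range, nsmul_eq_mul, Nat.cast_choose_two]
  have hN : ((r + s).choose r : ℚ) ≠ 0 := by exact_mod_cast (Nat.choose_pos (by omega)).ne'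
  have hn : (r : ℚ) + s - 1 ≠ 0 := by
    have : (2 : ℚ) ≤ r := by exact_mod_cast hr2
    have : (0 : ℚ) ≤ s := s.cast_nonneg
    linarith
  push_cast
  field_simp
  ring

/-- If `t ∣ r` and `t ∣ s`, the average size of the `t`-core of a uniformly
random partition in `Par_{r,s}` equals `((t−1)/2) · rs/(r+s−1)`. -/
theorem expected_core_size_divisible (r s t : ℕ) (hr : 1 ≤ r) (hs : 1 ≤ s) (ht : 2 ≤ t)
    (hrt : t ∣ r) (hst : t ∣ s) :
    (1 / ((r + s).choose r : ℚ)) *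
        ∑ᶠ lam ∈ {lam : Fin r → ℕ | IsRectPartition r s lam}, (coreSize r t lam : ℚ) =
      (((t : ℚ) - 1) / 2) * ((r : ℚ) * (s : ℚ) / ((r : ℚ) + (s : ℚ) - 1)) :=
  expected_core_size_divisible_general r s t hr ht hrt hst
end
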